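/- arXiv:0711.3598 — 2 statements merged into one kernel-verified Lean document; each statement's English description precedes it below -/
import Mathlib

section
/- Let v be a row k-vector, J an invertible k×k real matrix, and let B be the k×k matrix whose first row is v·J and whose remaining k-1 rows are the last k-1 rows of J. Writing v = (v₁, v') with v₁ ∈ ℝ and partitioning J into blocks J_{ψψ} (1×1), J_{ψλ}, J_{λψ}, J_{λλ} with J_{λλ} invertible and J symmetric, then det(B) = det(J_{λλ}) · v₁ · (J_{ψψ} - J_{ψλ} J_{λλ}⁻¹ J_{λψ}). -/
/-!
Since `v = v₁ • (1, -J_{ψλ} J_{λλ}⁻¹)`, the row `v * J` is one step of block Gaussian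
elimination: it equals `(v₁ • S, 0)` with `S` the Schur complement of `J_{λλ}`. Hence `B` is block
lower triangular and its determinant is `v₁ * S * det J_{λλ}`.
-/

open Matrix

section

variable {l m n R : Type*} [Fintype m] [Fintype n] [DecidableEq n] [CommRing R]

theorem fromCols_neg_mul_inv_mul_fromBlocks (X : Matrix l m R) (A : Matrix m m R)
    (B : Matrix m n R) (C : Matrix n m R) (D : Matrix n n R) (hD : IsUnit D.det) :
    fromCols X (-(X * B * D⁻¹)) * fromBlocks A B C D = fromCols (X * (A - B * D⁻¹ * C)) 0 := by
  rw [fromCols_mul_fromBlocks, Matrix.neg_mul, Matrix.neg_mul, Matrix.mul_assoc (X * B) D⁻¹ D,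
    nonsing_inv_mul D hD, Matrix.mul_one, add_neg_cancel, Matrix.mul_sub, sub_eq_add_neg]
  simp only [Matrix.mul_assoc]

theorem det_smul_fin_one (c : R) (A : Matrix (Fin 1) (Fin 1) R) : (c • A).det = c * A 0 0 := by
  rw [det_fin_one, Matrix.smul_apply, smul_eq_mul]

end

theorem det_first_row_replaced_general
    (m : ℕ)
    (Jpp : Matrix (Fin 1) (Fin 1) ℝ) (Jpl : Matrix (Fin 1) (Fin m) ℝ)
    (Jlp : Matrix (Fin m) (Fin 1) ℝ) (Jll : Matrix (Fin m) (Fin m) ℝ)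
    (J : Matrix (Fin 1 ⊕ Fin m) (Fin 1 ⊕ Fin m) ℝ)
    (hJ : J = Matrix.fromBlocks Jpp Jpl Jlp Jll)
    (hll : IsUnit Jll.det)
    (v₁ : ℝ) (v : Matrix (Fin 1) (Fin 1 ⊕ Fin m) ℝ)
    (hv₁ : v.submatrix id Sum.inl = v₁ • (1 : Matrix (Fin 1) (Fin 1) ℝ))
    (hv' : v.submatrix id Sum.inr = -v₁ • (Jpl * Jll⁻¹))
    (B : Matrix (Fin 1 ⊕ Fin m) (Fin 1 ⊕ Fin m) ℝ)
    (hB : B = Matrix.fromBlocks ((v * J).submatrix id Sum.inl) ((v * J).submatrix id Sum.inr) Jlp Jll) :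
    B.det = Jll.det * v₁ * (Jpp 0 0 - (Jpl * Jll⁻¹ * Jlp) 0 0) := by
  set X : Matrix (Fin 1) (Fin 1) ℝ := v₁ • 1
  have hv : v = fromCols X (-(X * Jpl * Jll⁻¹)) := by
    rw [← fromCols_toCols v]
    refine congrArg₂ fromCols hv₁ ?_
    rw [Matrix.smul_mul, Matrix.one_mul, Matrix.smul_mul, ← neg_smul]
    exact hv'
  have hvJ : v * J = fromCols (v₁ • (Jpp - Jpl * Jll⁻¹ * Jlp)) 0 := by
    rw [hv, hJ, fromCols_neg_mul_inv_mul_fromBlocks _ _ _ _ _ hll, Matrix.smul_mul,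
      Matrix.one_mul]
  rw [hB, hvJ]
  change (fromBlocks (v₁ • (Jpp - Jpl * Jll⁻¹ * Jlp)) 0 Jlp Jll).det = _
  rw [det_fromBlocks_zero₁₂, det_smul_fin_one, Matrix.sub_apply]
  ring

/-- Let `J` be a symmetric invertible matrix partitioned with a `1×1` top-left block,
with `J_{λλ}` invertible, and let `v` be a row vector whose first component is `v₁` and
whose remaining part is `-v₁ • J_{ψλ} J_{λλ}⁻¹`.  If `B` is the matrix whose first row
is `v * J` and whose remaining rows are the last rows of `J`, then
`det B = det J_{λλ} * v₁ * (J_{ψψ} - J_{ψλ} J_{λλ}⁻¹ J_{λψ})`. -/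
theorem det_first_row_replaced
    (m : ℕ)
    (Jpp : Matrix (Fin 1) (Fin 1) ℝ) (Jpl : Matrix (Fin 1) (Fin m) ℝ)
    (Jlp : Matrix (Fin m) (Fin 1) ℝ) (Jll : Matrix (Fin m) (Fin m) ℝ)
    (J : Matrix (Fin 1 ⊕ Fin m) (Fin 1 ⊕ Fin m) ℝ)
    (hJ : J = Matrix.fromBlocks Jpp Jpl Jlp Jll)
    (hsymm : J.IsSymm) (hJu : IsUnit J.det) (hll : IsUnit Jll.det)
    (v₁ : ℝ) (v : Matrix (Fin 1) (Fin 1 ⊕ Fin m) ℝ)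
    (hv₁ : v.submatrix id Sum.inl = v₁ • (1 : Matrix (Fin 1) (Fin 1) ℝ))
    (hv' : v.submatrix id Sum.inr = -v₁ • (Jpl * Jll⁻¹))
    (B : Matrix (Fin 1 ⊕ Fin m) (Fin 1 ⊕ Fin m) ℝ)
    (hB : B = Matrix.fromBlocks ((v * J).submatrix id Sum.inl) ((v * J).submatrix id Sum.inr) Jlp Jll) :
    B.det = Jll.det * v₁ * (Jpp 0 0 - (Jpl * Jll⁻¹ * Jlp) 0 0) :=
  det_first_row_replaced_general m Jpp Jpl Jlp Jll J hJ hll v₁ v hv₁ hv' B hB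
end

section
/- Let u : ℝ → ℝ be smooth with u(0) = 0, u'(0) = 1, and u(x)/x > 0 for x ≠ 0 near 0, and let g(x) = x + (1/x)·log(u(x)/x) for x ≠ 0 near 0. Then x + (1/x)log(u(x)/x) → u''(0)/2 as x → 0, so g extends continuously to x = 0 with value g(0) = u''(0)/2. -/
open Filter Topology

noncomputable def logRatio : ℝ → ℝ := fun y => if y = 1 then 1 else Real.log y / (y - 1)

lemma logRatio_tendsto : Filter.Tendsto logRatio (𝓝 (1 : ℝ)) (𝓝 1) := by
  have main : Filter.Tendsto logRatio (𝓝[≠] (1 : ℝ) ⊔ pure 1) (𝓝 1) := by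
    rw [Filter.tendsto_sup]
    constructor
    · have h := (Real.hasDerivAt_log one_ne_zero)
      rw [hasDerivAt_iff_tendsto_slope] at h
      simp only [inv_one] at h
      refine h.congr' ?_
      filter_upwards [self_mem_nhdsWithin] with y hy
      simp only [Set.mem_compl_iff, Set.mem_singleton_iff] at hy
      simp [slope, logRatio, hy, Real.log_one, vsub_eq_sub, inv_mul_eq_div]
    · simpa [logRatio] using tendsto_pure_nhds logRatio 1
  rwa [nhdsNE_sup_pure] at main

lemma log_eq_logRatio (y : ℝ) : Real.log y = logRatio y * (y - 1) := by
  by_cases hy : y = 1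
  · simp [hy, logRatio]
  · simp only [logRatio, hy, if_false]
    field_simp [sub_ne_zero.mpr hy]

/-- Removable singularity of `R* = x + (1/x) log (u x / x)`: if `u` is `C²` with
`u 0 = 0`, `u' 0 = 1` and `u x / x > 0` for `x ≠ 0` near `0`, then
`x + (1/x) log (u x / x) → u''(0) / 2` as `x → 0` through nonzero values. -/
theorem modified_statistic_removable_singularity
    (u : ℝ → ℝ) (hu : ContDiff ℝ 2 u) (h0 : u 0 = 0) (h1 : deriv u 0 = 1)
    (hpos : ∀ᶠ x in 𝓝[≠] (0 : ℝ), u x / x > 0) :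
    Tendsto (fun x : ℝ => x + (1 / x) * Real.log (u x / x)) (𝓝[≠] (0 : ℝ))
      (𝓝 (iteratedDeriv 2 u 0 / 2)) := by
  set c := iteratedDeriv 2 u 0 with hc
  have hud : Differentiable ℝ u := hu.differentiable (by norm_num)
  have hud' : Differentiable ℝ (deriv u) :=
    (hu.iterate_deriv' 1 1).differentiable (by norm_num)
  -- derivative of deriv u at 0 is c
  have hc2 : deriv (deriv u) 0 = c := by
    rw [hc, iteratedDeriv_succ, iteratedDeriv_one]
  -- s x = u x / x tends to 1
  have hs : Tendsto (fun x : ℝ => u x / x) (𝓝[≠] 0) (𝓝 1) := by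
    have h := (hud 0).hasDerivAt
    rw [h1, hasDerivAt_iff_tendsto_slope] at h
    refine h.congr' ?_
    filter_upwards with x
    simp [slope, h0, vsub_eq_sub, inv_mul_eq_div]
  -- (deriv u x - 1) / x → c
  have hslope : Tendsto (fun x : ℝ => (deriv u x - 1) / x) (𝓝[≠] 0) (𝓝 c) := by
    have h := (hud' 0).hasDerivAt
    rw [hc2, hasDerivAt_iff_tendsto_slope] at h
    refine h.congr' ?_
    filter_upwards with x
    simp [slope, h1, vsub_eq_sub, inv_mul_eq_div]
  -- L'Hôpital: (u x - x) / x ^ 2 → c / 2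
  have hlh : Tendsto (fun x : ℝ => (u x - x) / x ^ 2) (𝓝[≠] 0) (𝓝 (c / 2)) := by
    apply HasDerivAt.lhopital_zero_nhdsNE
      (f' := fun x => deriv u x - 1) (g' := fun x => 2 * x)
    · filter_upwards with x
      exact ((hud x).hasDerivAt).sub (hasDerivAt_id x)
    · filter_upwards with x
      simpa using (hasDerivAt_pow 2 x)
    · filter_upwards [self_mem_nhdsWithin] with x hx
      simp only [Set.mem_compl_iff, Set.mem_singleton_iff] at hx
      positivity
    · have : Tendsto (fun x : ℝ => u x - x) (𝓝 0) (𝓝 0) := by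
        have := (hud.continuous.sub continuous_id).tendsto 0
        exact (by simpa [h0] using this : Tendsto (u - id) (𝓝 0) (𝓝 0))
      exact this.mono_left nhdsWithin_le_nhds
    · have : Tendsto (fun x : ℝ => x ^ 2) (𝓝 0) (𝓝 (0 : ℝ)) := by
        simpa using (continuous_pow 2).tendsto (0 : ℝ)
      exact this.mono_left nhdsWithin_le_nhds
    · have := hslope.div_const 2
      refine this.congr' ?_
      filter_upwards with x
      rw [div_div, mul_comm]
  -- combine
  have hG : Tendsto (fun x : ℝ => logRatio (u x / x)) (𝓝[≠] 0) (𝓝 1) :=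
    logRatio_tendsto.comp hs
  have key : Tendsto (fun x : ℝ => x + logRatio (u x / x) * ((u x - x) / x ^ 2))
      (𝓝[≠] 0) (𝓝 (c / 2)) := by
    have h := (tendsto_id.mono_left nhdsWithin_le_nhds).add (hG.mul hlh)
    simpa using h
  refine key.congr' ?_
  filter_upwards [self_mem_nhdsWithin] with x hx
  simp only [Set.mem_compl_iff, Set.mem_singleton_iff] at hx
  rw [log_eq_logRatio (u x / x)]
  have : u x / x - 1 = (u x - x) / x := by field_simp
  rw [this]
  field_simp
end
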